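/- arXiv:2507.01784 — 4 statements merged into one kernel-verified Lean document; each statement's English description precedes it below -/
import Mathlib

section
/- Let (R, m, k) be a commutative noetherian local ring whose maximal ideal decomposes as m = I ⊕ J (an internal direct sum) for nonzero ideals I and J of R. Then R is isomorphic as a ring to the fiber product R/I ×_k R/J, i.e., to the subring {(a, b) ∈ R/I × R/J : a and b have the same image in k} where k = R/m. -/
open IsLocalRing

namespace Ideal

variable {R : Type*} [CommRing R] {I J K : Ideal R}

/-- The fiber product `R/I ×_{R/K} R/J` for ideals `I, J ≤ K`. -/
abbrev quotientFiberProduct (hIK : I ≤ K) (hJK : J ≤ K) : Subring ((R ⧸ I) × (R ⧸ J)) :=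
  RingHom.eqLocus ((Quotient.factor hIK).comp (RingHom.fst (R ⧸ I) (R ⧸ J)))
    ((Quotient.factor hJK).comp (RingHom.snd (R ⧸ I) (R ⧸ J)))

def toQuotientFiberProduct (hIK : I ≤ K) (hJK : J ≤ K) :
    R →+* quotientFiberProduct hIK hJK :=
  ((Quotient.mk I).prod (Quotient.mk J)).codRestrict _ fun _ => rfl

@[simp]
theorem toQuotientFiberProduct_apply (hIK : I ≤ K) (hJK : J ≤ K) (x : R) :
    (toQuotientFiberProduct hIK hJK x : (R ⧸ I) × (R ⧸ J)) = (Quotient.mk I x, Quotient.mk J x) :=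
  rfl

theorem ker_toQuotientFiberProduct (hIK : I ≤ K) (hJK : J ≤ K) :
    RingHom.ker (toQuotientFiberProduct hIK hJK) = I ⊓ J := by
  ext x
  simp only [RingHom.mem_ker, Subtype.ext_iff, toQuotientFiberProduct_apply, mem_inf,
    Subring.coe_zero, Prod.mk_eq_zero, Quotient.eq_zero_iff_mem]

/-- Two classes agreeing modulo `K ≤ I ⊔ J` differ by `i + j`; then `x - i` lifts both. -/
theorem toQuotientFiberProduct_surjective (hIK : I ≤ K) (hJK : J ≤ K) (hK : K ≤ I ⊔ J) :
    Function.Surjective (toQuotientFiberProduct hIK hJK) := by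
  rintro ⟨⟨a, b⟩, hab⟩
  obtain ⟨x, rfl⟩ := Quotient.mk_surjective a
  obtain ⟨y, rfl⟩ := Quotient.mk_surjective b
  have hxy : x - y ∈ I ⊔ J := hK <| Quotient.eq.mp (by simpa [Quotient.factor_mk] using hab)
  obtain ⟨i, hi, j, hj, hij⟩ := Submodule.mem_sup.mp hxy
  refine ⟨x - i, Subtype.ext (Prod.ext ?_ ?_)⟩
  · rw [toQuotientFiberProduct_apply, Quotient.eq]
    simpa using I.neg_mem hi
  · rw [toQuotientFiberProduct_apply, Quotient.eq]
    convert hj using 1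
    linear_combination -hij

/-- The analogue of the Chinese remainder theorem for ideals that need not be coprime. -/
noncomputable def quotientInfEquivQuotientFiberProduct (hsum : I ⊔ J = K) :
    R ⧸ (I ⊓ J) ≃+* quotientFiberProduct (hsum ▸ le_sup_left : I ≤ K)
      (hsum ▸ le_sup_right : J ≤ K) :=
  (quotEquivOfEq (ker_toQuotientFiberProduct _ _).symm).trans <|
    RingHom.quotientKerEquivOfSurjective
      (toQuotientFiberProduct_surjective _ _ hsum.ge)

end Ideal

theorem stmt1_general {R : Type*} [CommRing R] [IsLocalRing R]
    (I J : Ideal R)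
    (hsum : I ⊔ J = maximalIdeal R) (hdisj : I ⊓ J = ⊥) :
    Nonempty (R ≃+* (RingHom.eqLocus
      ((Ideal.Quotient.factor (S := I) (T := maximalIdeal R) (hsum ▸ le_sup_left)).comp
        (RingHom.fst (R ⧸ I) (R ⧸ J)))
      ((Ideal.Quotient.factor (S := J) (T := maximalIdeal R) (hsum ▸ le_sup_right)).comp
        (RingHom.snd (R ⧸ I) (R ⧸ J))))) :=
  ⟨(RingEquiv.quotientBot R).symm.trans <|
    (Ideal.quotEquivOfEq hdisj.symm).trans (Ideal.quotientInfEquivQuotientFiberProduct hsum)⟩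

/-- A commutative noetherian local ring whose maximal ideal decomposes as an internal
direct sum `m = I ⊕ J` of nonzero ideals is isomorphic to the fiber product
`R/I ×_k R/J` over the residue field `k = R/m`, i.e. to the subring of
`(R/I) × (R/J)` of pairs whose components have the same image in `k`. -/
theorem stmt1 {R : Type*} [CommRing R] [IsNoetherianRing R] [IsLocalRing R]
    (I J : Ideal R) (hI : I ≠ ⊥) (hJ : J ≠ ⊥)
    (hsum : I ⊔ J = maximalIdeal R) (hdisj : I ⊓ J = ⊥) :
    Nonempty (R ≃+* (RingHom.eqLocus
      ((Ideal.Quotient.factor (S := I) (T := maximalIdeal R) (hsum ▸ le_sup_left)).comp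
        (RingHom.fst (R ⧸ I) (R ⧸ J)))
      ((Ideal.Quotient.factor (S := J) (T := maximalIdeal R) (hsum ▸ le_sup_right)).comp
        (RingHom.snd (R ⧸ I) (R ⧸ J))))) :=
  stmt1_general I J hsum hdisj
end

section
/- For a field k, the ring k[[x]] ×_k k[[y]] (fiber product over k of two formal power series rings in one variable) is isomorphic as a k-algebra to k[[x, y]]/(xy). -/
/-- The constant coefficient map `k⟦X⟧ → k` as a `k`-algebra homomorphism. -/
noncomputable def psConstantCoeffAlgHom (k : Type*) [CommRing k] :
    PowerSeries k →ₐ[k] k :=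
  { (PowerSeries.constantCoeff : PowerSeries k →+* k) with
    commutes' := fun r => by
      simp [PowerSeries.algebraMap_apply] }

/-!
The pair of restrictions `F ↦ (F(x, 0), F(0, y))` is a surjective `k`-algebra map from `k⟦x, y⟧`
onto the fiber product, since a pair `(f, g)` with `f(0) = g(0)` is the image of
`f(x) + g(y) - g(0)`. Its kernel consists of the series with no pure powers of `x` or of `y`,
which are exactly the multiples of `xy`.
-/

open Finsupp

namespace MvPowerSeries

variable {σ R : Type*} [CommSemiring R]

noncomputable def axisRestrict (s : σ) : MvPowerSeries σ R →ₐ[R] PowerSeries R where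
  toFun F := PowerSeries.mk fun n => coeff (single s n) F
  map_one' := by
    classical
    ext n
    simp [coeff_one, PowerSeries.coeff_one, single_eq_zero]
  map_mul' F G := by
    classical
    ext n
    rw [PowerSeries.coeff_mk, PowerSeries.coeff_mul, coeff_mul, antidiagonal_single,
      Finset.sum_map]
    simp
  map_zero' := by
    ext n
    simp
  map_add' F G := by
    ext n
    simp
  commutes' r := by
    classical
    ext n
    simp [algebraMap_apply, coeff_C, PowerSeries.coeff_C, single_eq_zero]

@[simp]
theorem coeff_axisRestrict (s : σ) (F : MvPowerSeries σ R) (n : ℕ) :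
    PowerSeries.coeff n (axisRestrict s F) = coeff (single s n) F := by
  simp [axisRestrict]

theorem constantCoeff_axisRestrict (s : σ) (F : MvPowerSeries σ R) :
    PowerSeries.constantCoeff (axisRestrict s F) = constantCoeff F := by
  rw [← PowerSeries.coeff_zero_eq_constantCoeff_apply, coeff_axisRestrict, single_zero,
    coeff_zero_eq_constantCoeff_apply]

theorem X_mul_X_dvd_iff {s t : σ} (hst : s ≠ t) {F : MvPowerSeries σ R} :
    X s * X t ∣ F ↔ ∀ m : σ →₀ ℕ, m s = 0 ∨ m t = 0 → coeff m F = 0 := by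
  constructor
  · rintro hF m (hm | hm)
    · exact X_dvd_iff.mp (dvd_of_mul_right_dvd hF) m hm
    · exact X_dvd_iff.mp (dvd_of_mul_left_dvd hF) m hm
  · intro hF
    obtain ⟨G, rfl⟩ := X_dvd_iff.mpr fun m hm => hF m (Or.inl hm)
    suffices X t ∣ G from mul_dvd_mul_left _ this
    refine X_dvd_iff.mpr fun m hm => ?_
    have hshift : coeff (m + single s 1) (X s * G) = coeff m G := by
      rw [X, coeff_monomial_mul, if_pos le_add_self, one_mul, add_tsub_cancel_right]
    rw [← hshift]
    exact hF _ (Or.inr (by simp [hm, hst]))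

end MvPowerSeries

open MvPowerSeries

section FiberProduct

variable {k : Type*} [CommRing k]

variable (k) in
noncomputable abbrev fiberProduct : Subalgebra k (PowerSeries k × PowerSeries k) :=
  AlgHom.equalizer
    ((psConstantCoeffAlgHom k).comp (AlgHom.fst k (PowerSeries k) (PowerSeries k)))
    ((psConstantCoeffAlgHom k).comp (AlgHom.snd k (PowerSeries k) (PowerSeries k)))

theorem mem_fiberProduct_iff {p : PowerSeries k × PowerSeries k} :
    p ∈ fiberProduct k ↔ PowerSeries.constantCoeff p.1 = PowerSeries.constantCoeff p.2 :=
  Iff.rfl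

variable (k) in
noncomputable def toFiberProduct : MvPowerSeries (Fin 2) k →ₐ[k] fiberProduct k :=
  ((axisRestrict 0).prod (axisRestrict 1)).codRestrict _ fun F =>
    mem_fiberProduct_iff.mpr
      ((constantCoeff_axisRestrict 0 F).trans (constantCoeff_axisRestrict 1 F).symm)

theorem coe_toFiberProduct (F : MvPowerSeries (Fin 2) k) :
    (toFiberProduct k F : PowerSeries k × PowerSeries k) = (axisRestrict 0 F, axisRestrict 1 F) :=
  rfl

theorem toFiberProduct_surjective : Function.Surjective (toFiberProduct k) := by
  rintro ⟨⟨f, g⟩, hfg⟩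
  rw [mem_fiberProduct_iff] at hfg
  -- the series `f(x) + g(y) - g(0)`
  let G : MvPowerSeries (Fin 2) k := fun m =>
    if m 1 = 0 then PowerSeries.coeff (m 0) f
    else if m 0 = 0 then PowerSeries.coeff (m 1) g else 0
  refine ⟨G, Subtype.ext ?_⟩
  rw [coe_toFiberProduct, Prod.mk.injEq]
  constructor <;> ext n <;> rw [coeff_axisRestrict, coeff_apply]
  · simp [G]
  · rcases eq_or_ne n 0 with rfl | hn
    · simpa [G] using hfg
    · simp [G, hn]

theorem ker_toFiberProduct :
    RingHom.ker (toFiberProduct k) = Ideal.span {X 0 * X 1} := by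
  ext F
  rw [RingHom.mem_ker, Ideal.mem_span_singleton, X_mul_X_dvd_iff (by decide)]
  have hzero : toFiberProduct k F = 0 ↔ axisRestrict 0 F = 0 ∧ axisRestrict 1 F = 0 := by
    rw [← Subtype.coe_inj, coe_toFiberProduct, ZeroMemClass.coe_zero, Prod.mk_eq_zero]
  simp only [hzero, PowerSeries.ext_iff, coeff_axisRestrict, map_zero]
  constructor
  · rintro ⟨h0, h1⟩ m (hm | hm)
    · rw [show m = single 1 (m 1) by ext i; fin_cases i <;> simp [hm]]
      exact h1 _
    · rw [show m = single 0 (m 0) by ext i; fin_cases i <;> simp [hm]]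
      exact h0 _
  · intro h
    exact ⟨fun n => h _ (Or.inr (by simp)), fun n => h _ (Or.inl (by simp))⟩

end FiberProduct

/-- For a field `k`, the fiber product `k[[x]] ×_k k[[y]]` (the subalgebra of
`k[[x]] × k[[y]]` of pairs whose constant terms agree) is isomorphic as a
`k`-algebra to `k[[x, y]]/(xy)`. -/
theorem stmt3 (k : Type*) [Field k] :
    Nonempty ((AlgHom.equalizer
        ((psConstantCoeffAlgHom k).comp (AlgHom.fst k (PowerSeries k) (PowerSeries k)))
        ((psConstantCoeffAlgHom k).comp (AlgHom.snd k (PowerSeries k) (PowerSeries k))))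
      ≃ₐ[k]
      (MvPowerSeries (Fin 2) k ⧸
        Ideal.span {(MvPowerSeries.X 0 : MvPowerSeries (Fin 2) k) * MvPowerSeries.X 1})) :=
  ⟨((Ideal.quotientKerAlgEquivOfSurjective toFiberProduct_surjective).symm.trans
    (Ideal.quotientEquivAlgOfEq k ker_toFiberProduct))⟩
end

section
/- Let (R, m, k) be a local ring with m = I ⊕ J for nonzero ideals I, J minimally generated by sequences x₁ (of length t) and x₂ (of length s) respectively, and let x = x₁ ∪ x₂. Then there are isomorphisms of DG R-algebras K^R(x) ⊗_R I ≅ (K^R(x₁) ⊗_R I) ⊗_R Λ R^s and K^R(x) ⊗_R J ≅ Λ R^t ⊗_R (K^R(x₂) ⊗_R J), where Λ R^s and Λ R^t carry the zero differential. -/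
set_option maxHeartbeats 1000000

open IsLocalRing

/-- The Koszul differential on the Koszul complex of `x : Fin e → R`, in the model where
elements are coefficient functions `Finset (Fin e) → R` (with respect to the standard
exterior-algebra basis `ω_Λ`), graded by the cardinality of the index set. -/
noncomputable def koszulD {R : Type*} [CommRing R] {e : ℕ} (x : Fin e → R) :
    (Finset (Fin e) → R) →ₗ[R] (Finset (Fin e) → R) where
  toFun c := fun Δ => ∑ i ∈ Δᶜ,
    (-1 : R) ^ (Δ.filter (· < i)).card * (x i * c (insert i Δ))
  map_add' c c' := by
    funext Δ
    simp [mul_add, Finset.sum_add_distrib]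
  map_smul' r c := by
    funext Δ
    simp [Finset.mul_sum, mul_left_comm]

/-- The exterior (wedge) product on the Koszul complex in the coefficient-function
model: `(c ∧ c') Λ = ∑_{Δ ⊆ Λ} ± c Δ · c' (Λ \ Δ)`, with the usual shuffle signs. -/
noncomputable def koszulWedge {R : Type*} [CommRing R] {e : ℕ} :
    (Finset (Fin e) → R) →ₗ[R] (Finset (Fin e) → R) →ₗ[R] (Finset (Fin e) → R) :=
  LinearMap.mk₂ R
    (fun c c' => fun Λ => ∑ Δ ∈ Λ.powerset,
      (-1 : R) ^ (((Δ ×ˢ (Λ \ Δ)).filter (fun p => p.2 < p.1)).card) *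
        (c Δ * c' (Λ \ Δ)))
    (by intro c₁ c₂ c'; funext Λ; simp [add_mul, mul_add, Finset.sum_add_distrib])
    (by intro r c c'; funext Λ; simp [Finset.mul_sum, mul_left_comm, mul_assoc])
    (by intro c c₁ c₂; funext Λ; simp [mul_add, Finset.sum_add_distrib])
    (by intro r c c'; funext Λ; simp [Finset.mul_sum, mul_left_comm, mul_assoc])

/-- The differential on `K^R(x₁) ⊗ Λ R^s`, in the model of coefficient functions on
`Finset (Fin t) × Finset (Fin s)`: the Koszul differential of `x₁` acting on the first
component only (`Λ R^s` carries the zero differential). -/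
noncomputable def koszulDFst {R : Type*} [CommRing R] {t s : ℕ} (x₁ : Fin t → R) :
    (Finset (Fin t) × Finset (Fin s) → R) →ₗ[R] (Finset (Fin t) × Finset (Fin s) → R) where
  toFun c := fun Δ => ∑ i ∈ Δ.1ᶜ,
    (-1 : R) ^ (Δ.1.filter (· < i)).card * (x₁ i * c (insert i Δ.1, Δ.2))
  map_add' c c' := by
    funext Δ
    simp [mul_add, Finset.sum_add_distrib]
  map_smul' r c := by
    funext Δ
    simp [Finset.mul_sum, mul_left_comm]

/-- The differential on `Λ R^t ⊗ K^R(x₂)`, in the model of coefficient functions on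
`Finset (Fin t) × Finset (Fin s)`: the Koszul differential of `x₂` acting on the second
component only, with the Koszul sign `(-1)^{degree of the first factor}` (`Λ R^t`
carries the zero differential). -/
noncomputable def koszulDSnd {R : Type*} [CommRing R] {t s : ℕ} (x₂ : Fin s → R) :
    (Finset (Fin t) × Finset (Fin s) → R) →ₗ[R] (Finset (Fin t) × Finset (Fin s) → R) where
  toFun c := fun Δ => (-1 : R) ^ Δ.1.card * ∑ j ∈ Δ.2ᶜ,
    (-1 : R) ^ (Δ.2.filter (· < j)).card * (x₂ j * c (Δ.1, insert j Δ.2))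
  map_add' c c' := by
    funext Δ
    simp [mul_add, Finset.sum_add_distrib]
  map_smul' r c := by
    funext Δ
    simp [Finset.mul_sum, mul_left_comm]

/-- The multiplication on the graded tensor product of the two Koszul exterior algebras,
in the model of coefficient functions on `Finset (Fin t) × Finset (Fin s)`, with the
sign rule for graded tensor products. -/
noncomputable def pairWedge {R : Type*} [CommRing R] {t s : ℕ} :
    (Finset (Fin t) × Finset (Fin s) → R) →ₗ[R]
      (Finset (Fin t) × Finset (Fin s) → R) →ₗ[R] (Finset (Fin t) × Finset (Fin s) → R) :=
  LinearMap.mk₂ R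
    (fun c c' => fun Λ => ∑ Δ₁ ∈ Λ.1.powerset, ∑ Δ₂ ∈ Λ.2.powerset,
      (-1 : R) ^ ((Λ.1 \ Δ₁).card * Δ₂.card) *
      ((-1 : R) ^ (((Δ₁ ×ˢ (Λ.1 \ Δ₁)).filter (fun p => p.2 < p.1)).card) *
       ((-1 : R) ^ (((Δ₂ ×ˢ (Λ.2 \ Δ₂)).filter (fun p => p.2 < p.1)).card) *
        (c (Δ₁, Δ₂) * c' (Λ.1 \ Δ₁, Λ.2 \ Δ₂)))))
    (by intro c₁ c₂ c'; funext Λ; simp [add_mul, mul_add, Finset.sum_add_distrib])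
    (by intro r c c'; funext Λ; simp [Finset.mul_sum, mul_left_comm, mul_assoc])
    (by intro c c₁ c₂; funext Λ; simp [mul_add, Finset.sum_add_distrib])
    (by intro r c c'; funext Λ; simp [Finset.mul_sum, mul_left_comm, mul_assoc])

/-! Splitting the index set `Fin (t + s)` into `Fin t ⊕ Fin s` identifies the Koszul
exterior algebra on `x = x₁ ∪ x₂` with the graded tensor product of those on `x₁` and `x₂`:
the wedge products agree once the `#p.2 * #q.1` inversions between the two blocks are
counted, and the Koszul differential of `x` becomes `d(x₁) ⊗ 1 ± 1 ⊗ d(x₂)`. On coefficients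
in `I` the second summand vanishes because `x₂ · I ⊆ I ∩ J = 0`; symmetrically on `J` the
first one does. -/

open Finset

namespace Fin

variable {m n : ℕ}

@[simp] lemma castAdd_lt_castAdd_iff {i j : Fin m} : castAdd n i < castAdd n j ↔ i < j :=
  Iff.rfl

@[simp] lemma castAdd_lt_natAdd (i : Fin m) (j : Fin n) : castAdd n i < natAdd m j := by
  simp only [lt_def, val_castAdd, val_natAdd]
  omega

@[simp] lemma not_natAdd_lt_castAdd (i : Fin m) (j : Fin n) : ¬natAdd m j < castAdd n i :=
  (castAdd_lt_natAdd i j).not_gt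

@[simp] lemma castAdd_ne_natAdd (i : Fin m) (j : Fin n) : castAdd n i ≠ natAdd m j :=
  (castAdd_lt_natAdd i j).ne

@[simp] lemma natAdd_ne_castAdd (i : Fin m) (j : Fin n) : natAdd m j ≠ castAdd n i :=
  (castAdd_lt_natAdd i j).ne'

end Fin

variable {t s : ℕ}

noncomputable def finsetFinSumFinEquiv :
    Finset (Fin t) × Finset (Fin s) ≃ Finset (Fin (t + s)) :=
  Finset.sumEquiv.toEquiv.symm.trans finSumFinEquiv.finsetCongr

lemma finsetFinSumFinEquiv_apply (p : Finset (Fin t) × Finset (Fin s)) :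
    finsetFinSumFinEquiv p = (p.1.disjSum p.2).map finSumFinEquiv.toEmbedding := rfl

@[simp] lemma castAdd_mem_finsetFinSumFinEquiv {p : Finset (Fin t) × Finset (Fin s)}
    {a : Fin t} :
    Fin.castAdd s a ∈ finsetFinSumFinEquiv p ↔ a ∈ p.1 := by
  simp [finsetFinSumFinEquiv_apply]

@[simp] lemma natAdd_mem_finsetFinSumFinEquiv {p : Finset (Fin t) × Finset (Fin s)}
    {b : Fin s} :
    Fin.natAdd t b ∈ finsetFinSumFinEquiv p ↔ b ∈ p.2 := by
  simp [finsetFinSumFinEquiv_apply]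

lemma finsetFinSumFinEquiv_sdiff (p q : Finset (Fin t) × Finset (Fin s)) :
    finsetFinSumFinEquiv (p.1 \ q.1, p.2 \ q.2)
      = finsetFinSumFinEquiv p \ finsetFinSumFinEquiv q := by
  ext x; induction x using Fin.addCases <;> simp

lemma finsetFinSumFinEquiv_compl (p : Finset (Fin t) × Finset (Fin s)) :
    finsetFinSumFinEquiv pᶜ = (finsetFinSumFinEquiv p)ᶜ := by
  ext x; induction x using Fin.addCases <;> simp

lemma finsetFinSumFinEquiv_insert_fst (p : Finset (Fin t) × Finset (Fin s)) (a : Fin t) :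
    finsetFinSumFinEquiv (insert a p.1, p.2)
      = insert (Fin.castAdd s a) (finsetFinSumFinEquiv p) := by
  ext x; induction x using Fin.addCases <;> simp

lemma finsetFinSumFinEquiv_insert_snd (p : Finset (Fin t) × Finset (Fin s)) (b : Fin s) :
    finsetFinSumFinEquiv (p.1, insert b p.2)
      = insert (Fin.natAdd t b) (finsetFinSumFinEquiv p) := by
  ext x; induction x using Fin.addCases <;> simp

lemma finsetFinSumFinEquiv_subset_iff {p q : Finset (Fin t) × Finset (Fin s)} :
    finsetFinSumFinEquiv p ⊆ finsetFinSumFinEquiv q ↔ p.1 ⊆ q.1 ∧ p.2 ⊆ q.2 := by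
  simp only [Finset.subset_iff]
  constructor
  · intro h
    exact ⟨fun a ha => by simpa using h (x := Fin.castAdd s a) (by simpa),
      fun b hb => by simpa using h (x := Fin.natAdd t b) (by simpa)⟩
  · rintro ⟨h₁, h₂⟩ x hx
    induction x using Fin.addCases <;> simp_all

lemma sum_finsetFinSumFinEquiv {M : Type*} [AddCommMonoid M]
    (p : Finset (Fin t) × Finset (Fin s)) (f : Fin (t + s) → M) :
    ∑ x ∈ finsetFinSumFinEquiv p, f x
      = ∑ a ∈ p.1, f (Fin.castAdd s a) + ∑ b ∈ p.2, f (Fin.natAdd t b) := by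
  simp [finsetFinSumFinEquiv_apply, sum_disjSum]

lemma sum_powerset_finsetFinSumFinEquiv {M : Type*} [AddCommMonoid M]
    (Λ : Finset (Fin t) × Finset (Fin s)) (f : Finset (Fin (t + s)) → M) :
    ∑ Δ ∈ (finsetFinSumFinEquiv Λ).powerset, f Δ
      = ∑ Δ₁ ∈ Λ.1.powerset, ∑ Δ₂ ∈ Λ.2.powerset, f (finsetFinSumFinEquiv (Δ₁, Δ₂)) := by
  rw [← sum_product' (f := fun Δ₁ Δ₂ => f (finsetFinSumFinEquiv (Δ₁, Δ₂)))]
  refine sum_nbij' finsetFinSumFinEquiv.symm finsetFinSumFinEquiv (fun Δ hΔ => ?_)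
    (fun p hp => ?_) (fun Δ _ => by simp) (fun p _ => by simp) (fun Δ _ => by simp)
  · rw [mem_powerset, ← finsetFinSumFinEquiv.apply_symm_apply Δ,
      finsetFinSumFinEquiv_subset_iff] at hΔ
    simpa only [mem_product, mem_powerset] using hΔ
  · rw [mem_powerset, finsetFinSumFinEquiv_subset_iff]
    simpa only [mem_product, mem_powerset] using hp

lemma card_filter_lt_castAdd (p : Finset (Fin t) × Finset (Fin s)) (a : Fin t) :
    #{x ∈ finsetFinSumFinEquiv p | x < Fin.castAdd s a} = #{a' ∈ p.1 | a' < a} := by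
  rw [card_filter, card_filter, sum_finsetFinSumFinEquiv]
  simp

lemma card_filter_lt_natAdd (p : Finset (Fin t) × Finset (Fin s)) (b : Fin s) :
    #{x ∈ finsetFinSumFinEquiv p | x < Fin.natAdd t b} = #p.1 + #{b' ∈ p.2 | b' < b} := by
  rw [card_filter, card_filter, sum_finsetFinSumFinEquiv]
  simp

lemma card_inversions_finsetFinSumFinEquiv (p q : Finset (Fin t) × Finset (Fin s)) :
    #{z ∈ finsetFinSumFinEquiv p ×ˢ finsetFinSumFinEquiv q | z.2 < z.1}
      = #{z ∈ p.1 ×ˢ q.1 | z.2 < z.1} + #{z ∈ p.2 ×ˢ q.2 | z.2 < z.1} + #p.2 * #q.1 := by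
  simp only [card_filter, sum_product, sum_finsetFinSumFinEquiv, Fin.castAdd_lt_castAdd_iff,
    Fin.natAdd_lt_natAdd_iff, Fin.castAdd_lt_natAdd, Fin.not_natAdd_lt_castAdd, if_true,
    if_false, sum_const, smul_eq_mul, mul_one, sum_add_distrib]
  ring

section Koszul

variable {R : Type*} [CommRing R]

variable (R) in
noncomputable def koszulSplit :
    (Finset (Fin (t + s)) → R) ≃ₗ[R] (Finset (Fin t) × Finset (Fin s) → R) :=
  LinearEquiv.funCongrLeft R R finsetFinSumFinEquiv

lemma koszulSplit_apply (c : Finset (Fin (t + s)) → R) (p : Finset (Fin t) × Finset (Fin s)) :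
    koszulSplit R c p = c (finsetFinSumFinEquiv p) := rfl

lemma koszulSplit_koszulWedge (c c' : Finset (Fin (t + s)) → R) :
    koszulSplit R (koszulWedge c c') = pairWedge (koszulSplit R c) (koszulSplit R c') := by
  funext Λ
  simp only [koszulSplit_apply, koszulWedge, pairWedge, LinearMap.mk₂_apply]
  rw [sum_powerset_finsetFinSumFinEquiv]
  refine sum_congr rfl fun Δ₁ _ => sum_congr rfl fun Δ₂ _ => ?_
  rw [← finsetFinSumFinEquiv_sdiff, card_inversions_finsetFinSumFinEquiv, pow_add, pow_add]
  ring

lemma koszulSplit_koszulD (x₁ : Fin t → R) (x₂ : Fin s → R)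
    (c : Finset (Fin (t + s)) → R) :
    koszulSplit R (koszulD (Fin.append x₁ x₂) c)
      = koszulDFst x₁ (koszulSplit R c) + koszulDSnd x₂ (koszulSplit R c) := by
  funext q
  simp only [koszulSplit_apply, koszulD, koszulDFst, koszulDSnd, LinearMap.coe_mk,
    AddHom.coe_mk, Pi.add_apply]
  rw [← finsetFinSumFinEquiv_compl, sum_finsetFinSumFinEquiv, mul_sum]
  congr 1
  · refine sum_congr rfl fun a _ => ?_
    rw [Fin.append_left, card_filter_lt_castAdd, ← finsetFinSumFinEquiv_insert_fst]
  · refine sum_congr rfl fun b _ => ?_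
    rw [Fin.append_right, card_filter_lt_natAdd, ← finsetFinSumFinEquiv_insert_snd, pow_add]
    ring

lemma koszulDFst_eq_zero_of_mul_eq_zero {x₁ : Fin t → R}
    {c : Finset (Fin t) × Finset (Fin s) → R} (h : ∀ i p, x₁ i * c p = 0) :
    koszulDFst x₁ c = 0 := by
  funext p
  simp [koszulDFst, h]

lemma koszulDSnd_eq_zero_of_mul_eq_zero {x₂ : Fin s → R}
    {c : Finset (Fin t) × Finset (Fin s) → R} (h : ∀ j p, x₂ j * c p = 0) :
    koszulDSnd x₂ c = 0 := by
  funext p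
  simp [koszulDSnd, h]

end Koszul

theorem stmt11_general {R : Type*} [CommRing R] (I J : Ideal R) (hdisj : I ⊓ J = ⊥)
    {t s : ℕ} (x₁ : Fin t → R) (x₂ : Fin s → R)
    (hx₁ : Ideal.span (Set.range x₁) = I)
    (hx₂ : Ideal.span (Set.range x₂) = J) :
    (∃ φ : (Finset (Fin (t + s)) → R) ≃ₗ[R] (Finset (Fin t) × Finset (Fin s) → R),
      (∀ c c', φ (koszulWedge c c') = pairWedge (φ c) (φ c')) ∧
      (∀ c, (∀ Δ, c Δ ∈ I) ↔ ∀ p, φ c p ∈ I) ∧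
      (∀ c : Finset (Fin (t + s)) → R, (∀ Δ, c Δ ∈ I) →
        φ (koszulD (Fin.append x₁ x₂) c) = koszulDFst x₁ (φ c))) ∧
    (∃ ψ : (Finset (Fin (t + s)) → R) ≃ₗ[R] (Finset (Fin t) × Finset (Fin s) → R),
      (∀ c c', ψ (koszulWedge c c') = pairWedge (ψ c) (ψ c')) ∧
      (∀ c, (∀ Δ, c Δ ∈ J) ↔ ∀ p, ψ c p ∈ J) ∧
      (∀ c : Finset (Fin (t + s)) → R, (∀ Δ, c Δ ∈ J) →
        ψ (koszulD (Fin.append x₁ x₂) c) = koszulDSnd x₂ (ψ c))) := by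
  have hIJ : ∀ a ∈ I, ∀ b ∈ J, a * b = 0 := fun a ha b hb => by
    simpa [hdisj] using Ideal.mul_le_inf (Ideal.mul_mem_mul ha hb)
  have hx₁I (i : Fin t) : x₁ i ∈ I := hx₁ ▸ Ideal.subset_span ⟨i, rfl⟩
  have hx₂J (j : Fin s) : x₂ j ∈ J := hx₂ ▸ Ideal.subset_span ⟨j, rfl⟩
  have hmem (K : Ideal R) (c : Finset (Fin (t + s)) → R) :
      (∀ Δ, c Δ ∈ K) ↔ ∀ p, koszulSplit R c p ∈ K :=
    finsetFinSumFinEquiv.forall_congr_right.symm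
  refine ⟨⟨koszulSplit R, koszulSplit_koszulWedge, hmem I, fun c hc => ?_⟩,
    ⟨koszulSplit R, koszulSplit_koszulWedge, hmem J, fun c hc => ?_⟩⟩
  · rw [koszulSplit_koszulD, koszulDSnd_eq_zero_of_mul_eq_zero, add_zero]
    intro j p
    rw [mul_comm]
    exact hIJ _ (hc _) _ (hx₂J j)
  · rw [koszulSplit_koszulD, koszulDFst_eq_zero_of_mul_eq_zero, zero_add]
    exact fun i p => hIJ _ (hx₁I i) _ (hc _)

/-- Let `(R, m, k)` be a local ring with `m = I ⊕ J` for nonzero ideals `I`, `J`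
minimally generated by `x₁` (of length `t`) and `x₂` (of length `s`), and let
`x = x₁ ∪ x₂`.  Then `K^R(x) ⊗ I ≅ (K^R(x₁) ⊗ I) ⊗ Λ R^s` and
`K^R(x) ⊗ J ≅ Λ R^t ⊗ (K^R(x₂) ⊗ J)` as DG algebras (without unity): there are
multiplicative `R`-linear isomorphisms of the Koszul exterior algebras that restrict to
isomorphisms of the coefficient subcomplexes with values in `I` (resp. `J`) and
intertwine the differentials there. -/
theorem stmt11 {R : Type*} [CommRing R] [IsNoetherianRing R] [IsLocalRing R]
    (I J : Ideal R) (hI : I ≠ ⊥) (hJ : J ≠ ⊥)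
    (hsum : I ⊔ J = maximalIdeal R) (hdisj : I ⊓ J = ⊥)
    {t s : ℕ} (x₁ : Fin t → R) (x₂ : Fin s → R)
    (hx₁ : Ideal.span (Set.range x₁) = I)
    (hx₁min : ∀ t' : ℕ, t' < t → ¬∃ g : Fin t' → R, Ideal.span (Set.range g) = I)
    (hx₂ : Ideal.span (Set.range x₂) = J)
    (hx₂min : ∀ s' : ℕ, s' < s → ¬∃ g : Fin s' → R, Ideal.span (Set.range g) = J) :
    (∃ φ : (Finset (Fin (t + s)) → R) ≃ₗ[R] (Finset (Fin t) × Finset (Fin s) → R),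
      (∀ c c', φ (koszulWedge c c') = pairWedge (φ c) (φ c')) ∧
      (∀ c, (∀ Δ, c Δ ∈ I) ↔ ∀ p, φ c p ∈ I) ∧
      (∀ c : Finset (Fin (t + s)) → R, (∀ Δ, c Δ ∈ I) →
        φ (koszulD (Fin.append x₁ x₂) c) = koszulDFst x₁ (φ c))) ∧
    (∃ ψ : (Finset (Fin (t + s)) → R) ≃ₗ[R] (Finset (Fin t) × Finset (Fin s) → R),
      (∀ c c', ψ (koszulWedge c c') = pairWedge (ψ c) (ψ c')) ∧
      (∀ c, (∀ Δ, c Δ ∈ J) ↔ ∀ p, ψ c p ∈ J) ∧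
      (∀ c : Finset (Fin (t + s)) → R, (∀ Δ, c Δ ∈ J) →
        ψ (koszulD (Fin.append x₁ x₂) c) = koszulDSnd x₂ (ψ c))) :=
  stmt11_general I J hdisj x₁ x₂ hx₁ hx₂
end

section
/- Let k be a field, r ≥ 2, and let T_i = k[[X₁^{(i)},...,X_{n_i}^{(i)}]] for 1 ≤ i ≤ r. Then the iterated fiber product T₁ ×_k ⋯ ×_k T_r is isomorphic as a k-algebra to k[[all variables]]/𝔍, where 𝔍 is the ideal generated by all products of a variable from block i with a variable from block j for i ≠ j. -/
/-!
Send a series in all the variables to the tuple of its restrictions to the blocks (the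
variables of the other blocks set to zero). This lands in the fiber product and is onto: a
tuple `x` with common constant term `c` is the image of `c + ∑ᵢ (xᵢ - c)`, the `i`-th summand
read in the variables of block `i`. A series is in the kernel iff none of its monomials lies in
a single block, i.e. iff each of its monomials is divisible by one of the finitely many products
`X_a⁽ⁱ⁾ X_b⁽ʲ⁾`, `i ≠ j`; peeling off these monomials one at a time puts it in the ideal they
generate.
-/

noncomputable def mvConstantCoeffAlgHom (σ k : Type*) [CommRing k] :
    MvPowerSeries σ k →ₐ[k] k :=
  { (MvPowerSeries.constantCoeff : MvPowerSeries σ k →+* k) with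
    commutes' := fun r => by
      simp [MvPowerSeries.algebraMap_apply, MvPowerSeries.constantCoeff_C] }

open Finsupp Function

namespace Finsupp

theorem single_add_single_le {α : Type*} {m : α →₀ ℕ} {s t : α} (hst : s ≠ t)
    (hs : s ∈ m.support) (ht : t ∈ m.support) : single s 1 + single t 1 ≤ m := by
  rw [mem_support_iff] at hs ht
  intro x
  rcases eq_or_ne x s with rfl | hxs
  · simp [hst, Nat.one_le_iff_ne_zero.2 hs]
  · rcases eq_or_ne x t with rfl | hxt
    · simp [hxs, Nat.one_le_iff_ne_zero.2 ht]
    · simp [hxs, hxt]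

theorem exists_mem_support_fst_ne {ι M : Type*} {σ : ι → Type*} [AddCommMonoid M] [Nonempty ι]
    (m : (Σ i, σ i) →₀ M) (hm : ∀ i, m ∉ Set.range (embDomain (Embedding.sigmaMk i))) :
    ∃ s ∈ m.support, ∃ t ∈ m.support, s.1 ≠ t.1 := by
  by_contra! h
  obtain ⟨u, hu⟩ | hempty := m.support.eq_empty_or_nonempty.symm
  · refine hm u.1 ((mem_range_embDomain_iff _ _).2 fun s hs => ?_)
    obtain ⟨j, b⟩ := s
    obtain rfl : j = u.1 := h _ hs u hu
    exact ⟨b, rfl⟩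
  · refine hm (Classical.arbitrary ι) ⟨0, ?_⟩
    rw [embDomain_zero, eq_comm, ← support_eq_empty, hempty]

end Finsupp

namespace MvPowerSeries

section Monomial

variable {σ R : Type*} [CommSemiring R]

theorem mem_ideal_span_monomial_image (A : Finset (σ →₀ ℕ)) {f : MvPowerSeries σ R}
    (hf : ∀ m, coeff m f ≠ 0 → ∃ a ∈ A, a ≤ m) :
    f ∈ Ideal.span ((fun a => monomial a (1 : R)) '' A) := by
  classical
  induction A using Finset.induction_on generalizing f with
  | empty =>
    have : f = 0 := ext fun m => by simpa using mt (hf m)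
    simp [this]
  | insert a A _ ih =>
    let g : MvPowerSeries σ R := fun m => coeff (m + a) f
    let h : MvPowerSeries σ R := fun m => if a ≤ m then 0 else coeff m f
    have hg : ∀ m, coeff m g = coeff (m + a) f := fun _ => rfl
    have hh : ∀ m, coeff m h = if a ≤ m then 0 else coeff m f := fun _ => rfl
    have hfgh : f = monomial a 1 * g + h := by
      ext m
      rw [map_add, coeff_monomial_mul, hh, hg]
      split_ifs with ham
      · rw [one_mul, tsub_add_cancel_of_le ham, add_zero]
      · rw [zero_add]
    have h_mem : h ∈ Ideal.span ((fun a => monomial a (1 : R)) '' A) := by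
      refine ih fun m hm => ?_
      rw [hh] at hm
      split_ifs at hm with ham
      · exact absurd rfl hm
      · obtain ⟨b, hb, hbm⟩ := hf m hm
        exact ⟨b, (Finset.mem_insert.1 hb).resolve_left (by rintro rfl; exact ham hbm), hbm⟩
    rw [hfgh, Finset.coe_insert, Set.image_insert_eq]
    exact Ideal.add_mem _ (Ideal.mul_mem_right _ _ (Ideal.subset_span (Set.mem_insert _ _)))
      (Ideal.span_mono (Set.subset_insert _ _) h_mem)

end Monomial

section KillCompl

variable {σ σ' τ R : Type*} [CommSemiring R]

theorem constantCoeff_killCompl (e : σ ↪ τ) (p : MvPowerSeries τ R) :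
    constantCoeff (killCompl e p) = constantCoeff p := by
  rw [← coeff_zero_eq_constantCoeff_apply, coeff_killCompl, embDomain_zero,
    coeff_zero_eq_constantCoeff_apply]

theorem killCompl_rename_of_disjoint (e : σ ↪ τ) (e' : σ' ↪ τ)
    (he : Disjoint (Set.range e) (Set.range e')) (p : MvPowerSeries σ' R) :
    killCompl e (rename e' p) = C (constantCoeff p) := by
  classical
  ext d
  rw [coeff_killCompl, coeff_C]
  split_ifs with hd
  · rw [hd, embDomain_zero, coeff_zero_eq_constantCoeff_apply, constantCoeff_rename]
  · refine coeff_rename_eq_zero _ _ fun ⟨d', hd'⟩ => ?_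
    have hmem : embDomain e d ∈ Set.range (embDomain e') :=
      ⟨d', by rw [embDomain_eq_mapDomain, hd']⟩
    rw [mem_range_embDomain_iff, support_embDomain, Finset.coe_map] at hmem
    obtain ⟨a, ha⟩ := support_nonempty_iff.2 hd
    exact he.ne_of_mem ⟨a, rfl⟩ (hmem ⟨a, ha, rfl⟩) rfl

end KillCompl

section FiberProduct

variable (R : Type*) [CommRing R] {ι : Type*} (σ : ι → Type*)

noncomputable def constantCoeffFiberProduct : Subalgebra R (Π i, MvPowerSeries (σ i) R) :=
  ⨅ (i : ι) (j : ι),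
    AlgHom.equalizer
      ((mvConstantCoeffAlgHom (σ i) R).comp (Pi.evalAlgHom R (fun l => MvPowerSeries (σ l) R) i))
      ((mvConstantCoeffAlgHom (σ j) R).comp (Pi.evalAlgHom R (fun l => MvPowerSeries (σ l) R) j))

noncomputable def crossTermIdeal : Ideal (MvPowerSeries (Σ i, σ i) R) :=
  Ideal.span {p | ∃ (i j : ι) (a : σ i) (b : σ j), i ≠ j ∧ p = X ⟨i, a⟩ * X ⟨j, b⟩}

noncomputable def killComplSigma : MvPowerSeries (Σ i, σ i) R →ₐ[R] Π i, MvPowerSeries (σ i) R :=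
  AlgHom.pi fun i => killCompl (Embedding.sigmaMk i)

variable {R σ}

theorem mem_constantCoeffFiberProduct {x : Π i, MvPowerSeries (σ i) R} :
    x ∈ constantCoeffFiberProduct R σ ↔ ∀ i j, constantCoeff (x i) = constantCoeff (x j) := by
  simp only [constantCoeffFiberProduct, Algebra.mem_iInf, AlgHom.mem_equalizer]
  rfl

theorem killCompl_sigmaMk_X_of_ne {i j : ι} (hij : i ≠ j) (a : σ j) :
    killCompl (R := R) (Embedding.sigmaMk i) (X ⟨j, a⟩) = 0 :=
  killCompl_X_eq_zero fun ⟨_, h⟩ => hij (congrArg Sigma.fst h)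

theorem killComplSigma_apply (f : MvPowerSeries (Σ i, σ i) R) (i : ι) :
    killComplSigma R σ f i = killCompl (Embedding.sigmaMk i) f := rfl

theorem killComplSigma_C_add_sum_rename [Fintype ι] (x : Π i, MvPowerSeries (σ i) R) (c : R)
    (hc : ∀ i, constantCoeff (x i) = c) :
    killComplSigma R σ (C c + ∑ i, rename (Embedding.sigmaMk i) (x i - C c)) = x := by
  funext l
  rw [killComplSigma_apply, map_add, map_sum, killCompl_C, Finset.sum_eq_single l]
  · rw [killCompl_rename_app, add_sub_cancel]
  · intro i _ hil
    rw [killCompl_rename_of_disjoint, map_sub, hc, constantCoeff_C, sub_self, map_zero]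
    exact Set.disjoint_left.2 fun _ ⟨a, ha⟩ ⟨b, hb⟩ => hil (congrArg Sigma.fst (hb.trans ha.symm))
  · exact fun h => (h (Finset.mem_univ l)).elim

theorem range_killComplSigma [Finite ι] [Nonempty ι] :
    (killComplSigma R σ).range = constantCoeffFiberProduct R σ := by
  have := Fintype.ofFinite ι
  ext x
  constructor
  · rintro ⟨f, rfl⟩
    exact mem_constantCoeffFiberProduct.2 fun i j =>
      (constantCoeff_killCompl _ f).trans (constantCoeff_killCompl _ f).symm
  · intro hx
    let i₀ := Classical.arbitrary ι
    exact ⟨_, killComplSigma_C_add_sum_rename x _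
      fun i => mem_constantCoeffFiberProduct.1 hx i i₀⟩

theorem ker_killComplSigma [Finite ι] [Nonempty ι] [∀ i, Finite (σ i)] :
    RingHom.ker (killComplSigma R σ) = crossTermIdeal R σ := by
  classical
  have := Fintype.ofFinite (Σ i, σ i)
  refine le_antisymm (fun f hf => ?_) ?_
  · have hcoeff (i : ι) (d : σ i →₀ ℕ) : coeff (embDomain (Embedding.sigmaMk i) d) f = 0 := by
      rw [← coeff_killCompl, ← killComplSigma_apply, RingHom.mem_ker.1 hf, Pi.zero_apply,
        map_zero]
    let crossExponents :=
      (Finset.univ.filter fun p : (Σ i, σ i) × (Σ i, σ i) => p.1.1 ≠ p.2.1).image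
        fun p => single p.1 1 + single p.2 1
    refine Ideal.span_mono ?_ (mem_ideal_span_monomial_image crossExponents fun m hm => ?_)
    · rintro _ ⟨_, ha, rfl⟩
      obtain ⟨⟨s, t⟩, hst, rfl⟩ := Finset.mem_image.1 ha
      exact ⟨s.1, t.1, s.2, t.2, (Finset.mem_filter.1 hst).2,
        by rw [X, X, monomial_mul_monomial, one_mul]⟩
    · obtain ⟨s, hs, t, ht, hst⟩ :=
        exists_mem_support_fst_ne m fun i ⟨d, hd⟩ => hm (hd ▸ hcoeff i d)
      exact ⟨_, Finset.mem_image_of_mem _ (Finset.mem_filter.2 ⟨Finset.mem_univ (s, t), hst⟩),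
        single_add_single_le (fun h => hst (congrArg Sigma.fst h)) hs ht⟩
  · rw [crossTermIdeal, Ideal.span_le]
    rintro _ ⟨i, j, a, b, hij, rfl⟩
    rw [SetLike.mem_coe, RingHom.mem_ker]
    funext l
    rw [killComplSigma_apply, map_mul, Pi.zero_apply]
    by_cases hil : l = i
    · rw [killCompl_sigmaMk_X_of_ne (a := b) (hil ▸ hij), mul_zero]
    · rw [killCompl_sigmaMk_X_of_ne hil, zero_mul]

noncomputable def quotientCrossTermIdealEquiv [Finite ι] [Nonempty ι] [∀ i, Finite (σ i)] :
    (MvPowerSeries (Σ i, σ i) R ⧸ crossTermIdeal R σ) ≃ₐ[R] constantCoeffFiberProduct R σ :=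
  (Ideal.quotientEquivAlgOfEq R ker_killComplSigma.symm).trans
    ((Ideal.quotientKerEquivRange (killComplSigma R σ)).trans
      (Subalgebra.equivOfEq _ _ range_killComplSigma))

end FiberProduct

end MvPowerSeries

theorem stmt14_general (k : Type*) [Field k] (r : ℕ) (hr : 2 ≤ r) (n : Fin r → ℕ) :
    Nonempty ((((⨅ (i : Fin r) (j : Fin r),
        AlgHom.equalizer
          ((mvConstantCoeffAlgHom (Fin (n i)) k).comp
            (Pi.evalAlgHom k (fun l => MvPowerSeries (Fin (n l)) k) i))
          ((mvConstantCoeffAlgHom (Fin (n j)) k).comp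
            (Pi.evalAlgHom k (fun l => MvPowerSeries (Fin (n l)) k) j))) :
        Subalgebra k (Π l, MvPowerSeries (Fin (n l)) k)))
      ≃ₐ[k]
      (MvPowerSeries ((i : Fin r) × Fin (n i)) k ⧸
        Ideal.span {p : MvPowerSeries ((i : Fin r) × Fin (n i)) k |
          ∃ (i j : Fin r) (a : Fin (n i)) (b : Fin (n j)), i ≠ j ∧
            p = MvPowerSeries.X ⟨i, a⟩ * MvPowerSeries.X ⟨j, b⟩})) := by
  have : Nonempty (Fin r) := ⟨⟨0, by omega⟩⟩
  exact ⟨(MvPowerSeries.quotientCrossTermIdealEquiv (R := k) (σ := fun i => Fin (n i))).symm⟩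

/-- For a field `k`, `r ≥ 2`, and power series rings `T i = k[[X₁⁽ⁱ⁾, ..., X_{nᵢ}⁽ⁱ⁾]]`,
the iterated fiber product `T₁ ×_k ⋯ ×_k T_r` (the subalgebra of `Π i, T i` of tuples
whose constant terms all agree) is isomorphic as a `k`-algebra to the power series ring
on all the variables modulo the ideal generated by all products of two variables from
different blocks. -/
theorem stmt14 (k : Type*) [Field k] (r : ℕ) (hr : 2 ≤ r) (n : Fin r → ℕ)
    (hn : ∀ i, 1 ≤ n i) :
    Nonempty ((((⨅ (i : Fin r) (j : Fin r),
        AlgHom.equalizer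
          ((mvConstantCoeffAlgHom (Fin (n i)) k).comp
            (Pi.evalAlgHom k (fun l => MvPowerSeries (Fin (n l)) k) i))
          ((mvConstantCoeffAlgHom (Fin (n j)) k).comp
            (Pi.evalAlgHom k (fun l => MvPowerSeries (Fin (n l)) k) j))) :
        Subalgebra k (Π l, MvPowerSeries (Fin (n l)) k)))
      ≃ₐ[k]
      (MvPowerSeries ((i : Fin r) × Fin (n i)) k ⧸
        Ideal.span {p : MvPowerSeries ((i : Fin r) × Fin (n i)) k |
          ∃ (i j : Fin r) (a : Fin (n i)) (b : Fin (n j)), i ≠ j ∧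
            p = MvPowerSeries.X ⟨i, a⟩ * MvPowerSeries.X ⟨j, b⟩})) :=
  stmt14_general k r hr n
end
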